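/- Soundness of Core logic with respect to classical semantics: if the sequent Δ ⊢ C is derivable in the Core sequent calculus then Δ ⊨ C classically, and if Δ ⊢ ∅ is derivable then Δ is classically unsatisfiable. -/
import Mathlib


inductive Form : Type where
  | var : Nat → Form
  | neg : Form → Form
  | conj : Form → Form → Form
  | disj : Form → Form → Form
  | imp : Form → Form → Form
deriving DecidableEq

open Form

/-- Sequent calculus for propositional Core logic (Tennant).
Contexts are finite sets of formulas; the conclusion is `some C` or `none`
(the empty / absurdity conclusion ⊥). -/
inductive Core : Finset Form → Option Form → Prop where
  | ax (A : Form) : Core {A} (some A)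
  | lneg {Δ : Finset Form} {A : Form} :
      Core Δ (some A) → Core (insert (Form.neg A) Δ) none
  | rneg {Δ : Finset Form} {A : Form} :
      Core (insert A Δ) none → Core Δ (some (Form.neg A))
  | landL {Δ : Finset Form} {x : Option Form} (A B : Form) :
      Core Δ x → (Δ ∩ {A, B}).Nonempty →
      Core (insert (Form.conj A B) (Δ \ {A, B})) x
  | randR {Δ Γ : Finset Form} {A B : Form} :
      Core Δ (some A) → Core Γ (some B) → Core (Δ ∪ Γ) (some (Form.conj A B))
  | lor {Δ Γ : Finset Form} {A B : Form} {x y z : Option Form} :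
      Core (insert A Δ) x → Core (insert B Γ) y →
      ((x = z ∧ (y = z ∨ y = none)) ∨ (y = z ∧ x = none)) →
      Core (insert (Form.disj A B) (Δ ∪ Γ)) z
  | ror1 {Δ : Finset Form} {A : Form} (B : Form) :
      Core Δ (some A) → Core Δ (some (Form.disj A B))
  | ror2 {Δ : Finset Form} {B : Form} (A : Form) :
      Core Δ (some B) → Core Δ (some (Form.disj A B))
  | limp {Δ Γ : Finset Form} {A B : Form} {x : Option Form} :
      Core Δ (some A) → Core (insert B Γ) x →
      Core (insert (Form.imp A B) (Δ ∪ Γ)) x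
  | rimpa {Δ : Finset Form} {A : Form} (B : Form) :
      Core (insert A Δ) none → Core Δ (some (Form.imp A B))
  | rimpb {Δ : Finset Form} {B : Form} (A : Form) :
      Core Δ (some B) → Core (Δ \ {A}) (some (Form.imp A B))

/-- Classical Boolean evaluation of formulas. -/
def Form.eval (v : Nat → Bool) : Form → Bool
  | Form.var n => v n
  | Form.neg A => !(A.eval v)
  | Form.conj A B => A.eval v && B.eval v
  | Form.disj A B => A.eval v || B.eval v
  | Form.imp A B => !(A.eval v) || B.eval v

/-- Classical semantic consequence: every valuation satisfying all of Δ satisfies C. -/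
def Models (Δ : Finset Form) (C : Form) : Prop :=
  ∀ v : Nat → Bool, (∀ A ∈ Δ, A.eval v = true) → C.eval v = true

/-- T is a (classical) tautology. -/
def Tautology (T : Form) : Prop := ∀ v : Nat → Bool, T.eval v = true

def Sat (v : Nat → Bool) : Option Form → Prop
  | some C => C.eval v = true
  | none => False

theorem core_sound_aux {Δ : Finset Form} {x : Option Form} (h : Core Δ x) :
    ∀ v : Nat → Bool, (∀ A ∈ Δ, A.eval v = true) → Sat v x := by
  induction h with
  | ax A => intro v hv; exact hv A (Finset.mem_singleton_self A)
  | lneg h ih =>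
      intro v hv
      have hn := hv _ (Finset.mem_insert_self _ _)
      have hA : Sat v (some _) := ih v (fun A hA => hv A (Finset.mem_insert_of_mem hA))
      simp only [Sat] at hA
      simp [Form.eval, hA] at hn
  | rneg h ih =>
      intro v hv
      show (Form.neg _).eval v = true
      simp only [Form.eval, Bool.not_eq_true']
      by_contra hA
      simp only [Bool.not_eq_false] at hA
      exact ih v (fun B hB => by
        rcases Finset.mem_insert.1 hB with rfl | hB
        · exact hA
        · exact hv B hB)
  | landL A B h hne ih =>
      intro v hv
      have hc := hv _ (Finset.mem_insert_self _ _)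
      simp only [Form.eval, Bool.and_eq_true] at hc
      refine ih v (fun D hD => ?_)
      by_cases hAB : D ∈ ({A, B} : Finset Form)
      · rcases Finset.mem_insert.1 hAB with rfl | hB
        · exact hc.1
        · rw [Finset.mem_singleton] at hB; subst hB; exact hc.2
      · exact hv D (Finset.mem_insert_of_mem (Finset.mem_sdiff.2 ⟨hD, hAB⟩))
  | randR h1 h2 ih1 ih2 =>
      intro v hv
      have hA : Sat v _ := ih1 v (fun D hD => hv D (Finset.mem_union_left _ hD))
      have hB : Sat v _ := ih2 v (fun D hD => hv D (Finset.mem_union_right _ hD))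
      show (Form.conj _ _).eval v = true
      simp only [Sat] at hA hB
      simp [Form.eval, hA, hB]
  | lor h1 h2 hcond ih1 ih2 =>
      intro v hv
      have hd := hv _ (Finset.mem_insert_self _ _)
      simp only [Form.eval, Bool.or_eq_true] at hd
      rcases hd with hA | hB
      · have hx : Sat v _ := ih1 v (fun D hD => by
          rcases Finset.mem_insert.1 hD with rfl | hD
          · exact hA
          · exact hv D (Finset.mem_insert_of_mem (Finset.mem_union_left _ hD)))
        rcases hcond with ⟨rfl, _⟩ | ⟨_, rfl⟩
        · exact hx
        · exact absurd hx id
      · have hy : Sat v _ := ih2 v (fun D hD => by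
          rcases Finset.mem_insert.1 hD with rfl | hD
          · exact hB
          · exact hv D (Finset.mem_insert_of_mem (Finset.mem_union_right _ hD)))
        rcases hcond with ⟨rfl, hy2 | rfl⟩ | ⟨rfl, _⟩
        · rw [hy2] at hy; exact hy
        · exact absurd hy id
        · exact hy
  | ror1 B h ih =>
      intro v hv
      have := ih v hv
      simp only [Sat] at this ⊢
      simp [Form.eval, this]
  | ror2 A h ih =>
      intro v hv
      have := ih v hv
      simp only [Sat] at this ⊢
      simp [Form.eval, this]
  | limp h1 h2 ih1 ih2 =>
      intro v hv
      have hA : Sat v _ := ih1 v (fun D hD =>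
        hv D (Finset.mem_insert_of_mem (Finset.mem_union_left _ hD)))
      simp only [Sat] at hA
      have hi := hv _ (Finset.mem_insert_self _ _)
      simp only [Form.eval, Bool.or_eq_true, Bool.not_eq_true', hA] at hi
      exact ih2 v (fun D hD => by
        rcases Finset.mem_insert.1 hD with rfl | hD
        · exact hi.resolve_left (by simp)
        · exact hv D (Finset.mem_insert_of_mem (Finset.mem_union_right _ hD)))
  | rimpa B h ih =>
      rename_i Δ' A
      intro v hv
      show (Form.imp A B).eval v = true
      cases hA : A.eval v with
      | false => simp [Form.eval, hA]
      | true =>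
        exact absurd (ih v (fun D hD => by
          rcases Finset.mem_insert.1 hD with rfl | hD
          · exact hA
          · exact hv D hD)) id
  | rimpb A h ih =>
      rename_i Δ' B
      intro v hv
      show (Form.imp A B).eval v = true
      cases hA : A.eval v with
      | false => simp [Form.eval, hA]
      | true =>
        have hB : Sat v (some B) := ih v (fun D hD => by
          by_cases hDA : D = A
          · subst hDA; exact hA
          · exact hv D (Finset.mem_sdiff.2 ⟨hD, by simp [hDA]⟩))
        simp only [Sat] at hB
        simp [Form.eval, hB]

/-- classical soundness of Core logic. -/
theorem core_sound :
    (∀ (Δ : Finset Form) (C : Form), Core Δ (some C) → Models Δ C) ∧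
    (∀ Δ : Finset Form, Core Δ none →
      ∀ v : Nat → Bool, ¬ (∀ A ∈ Δ, A.eval v = true)) := by
  refine ⟨fun Δ C h v hv => core_sound_aux h v hv, fun Δ h v hv => core_sound_aux h v hv⟩
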